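/- arXiv:1211.4613 — 2 statements merged into one kernel-verified Lean document; each statement's English description precedes it below -/
import Mathlib

section
/- Assume additionally that 1 < μ := m ∑_{n≥1} g H^n 1^t < ∞ and that ∑_{n≥1} (H^n 1^t)_i < ∞ for every i. With β̂ := (μ−1)/(ρ−1), the dual right eigenvector û defined by û_i := (1+m̂) β̂^{-1} ∑_{n≥1} ρ^n (Ĥ^n 1^t)_i satisfies û_i = (1+m)(1/q_i − 1)/(μ−1) for every i, where Ĥ = (ĥ_{ij}). -/
/-- Right action of an infinite matrix on a column vector: `(H y)_i = ∑_j H_{ij} y_j`. -/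
noncomputable def matVec (H : ℕ → ℕ → ℝ) (y : ℕ → ℝ) : ℕ → ℝ := fun i => ∑' j, H i j * y j

/-- `k`-fold right action: `(H^k y)_i`. -/
noncomputable def matPow (H : ℕ → ℕ → ℝ) : ℕ → (ℕ → ℝ) → ℕ → ℝ
  | 0, y => y
  | k + 1, y => matVec H (matPow H k y)

/-- Left action of an infinite matrix on a row vector: `(x H)_j = ∑_i x_i H_{ij}`. -/
noncomputable def vecMat (x : ℕ → ℝ) (H : ℕ → ℕ → ℝ) : ℕ → ℝ := fun j => ∑' i, x i * H i j

/-- `k`-fold left action: `(x H^k)_j`. -/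
noncomputable def vecPow (x : ℕ → ℝ) (H : ℕ → ℕ → ℝ) : ℕ → ℕ → ℝ
  | 0 => x
  | k + 1 => vecMat (vecPow x H k) H

/-- Bounds: if `0 ≤ y ≤ 1` pointwise then so is `H^n y`. -/
lemma matPow_bounds (H : ℕ → ℕ → ℝ) (hH : ∀ i j, 0 ≤ H i j) (hHsum : ∀ i, Summable (H i))
    (hHrow : ∀ i, ∑' j, H i j ≤ 1) (y : ℕ → ℝ) (hy0 : ∀ j, 0 ≤ y j) (hy1 : ∀ j, y j ≤ 1) :
    ∀ n j, 0 ≤ matPow H n y j ∧ matPow H n y j ≤ 1 := by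
  intro n
  induction n with
  | zero => intro j; exact ⟨hy0 j, hy1 j⟩
  | succ k ih =>
    intro i
    have hs : Summable (fun j => H i j * matPow H k y j) :=
      Summable.of_nonneg_of_le (fun j => mul_nonneg (hH i j) (ih j).1)
        (fun j => by
          have := (ih j).2
          nlinarith [hH i j]) (hHsum i)
    constructor
    · exact tsum_nonneg (fun j => mul_nonneg (hH i j) (ih j).1)
    · calc matPow H (k+1) y i = ∑' j, H i j * matPow H k y j := rfl
        _ ≤ ∑' j, H i j := Summable.tsum_le_tsum (fun j => by nlinarith [hH i j, (ih j).2]) hs (hHsum i)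
        _ ≤ 1 := hHrow i

lemma matPow_summable (H : ℕ → ℕ → ℝ) (hH : ∀ i j, 0 ≤ H i j) (hHsum : ∀ i, Summable (H i))
    (hHrow : ∀ i, ∑' j, H i j ≤ 1) (y : ℕ → ℝ) (hy0 : ∀ j, 0 ≤ y j) (hy1 : ∀ j, y j ≤ 1) (n : ℕ) (i : ℕ) :
    Summable (fun j => H i j * matPow H n y j) :=
  Summable.of_nonneg_of_le
    (fun j => mul_nonneg (hH i j) (matPow_bounds H hH hHsum hHrow y hy0 hy1 n j).1)
    (fun j => by nlinarith [hH i j, (matPow_bounds H hH hHsum hHrow y hy0 hy1 n j).2])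
    (hHsum i)

lemma matPow_mono (H : ℕ → ℕ → ℝ) (hH : ∀ i j, 0 ≤ H i j) (hHsum : ∀ i, Summable (H i))
    (hHrow : ∀ i, ∑' j, H i j ≤ 1) (y z : ℕ → ℝ) (hy0 : ∀ j, 0 ≤ y j) (hy1 : ∀ j, y j ≤ 1)
    (hz0 : ∀ j, 0 ≤ z j) (hz1 : ∀ j, z j ≤ 1) (hyz : ∀ j, y j ≤ z j) :
    ∀ n j, matPow H n y j ≤ matPow H n z j := by
  intro n
  induction n with
  | zero => exact hyz
  | succ k ih =>
    intro i
    exact Summable.tsum_le_tsum (fun j => mul_le_mul_of_nonneg_left (ih j) (hH i j))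
      (matPow_summable H hH hHsum hHrow y hy0 hy1 k i)
      (matPow_summable H hH hHsum hHrow z hz0 hz1 k i)

/-- if `1 < μ := m ∑_{n≥1} g H^n 1^t < ∞` and `∑_{n≥1} (H^n 1^t)_i < ∞` for
every `i`, then with `β̂ := (μ-1)/(ρ-1)` the dual right eigenvector
`û_i := (1+m̂) β̂⁻¹ ∑_{n≥1} ρ^n (Ĥ^n 1^t)_i` equals `(1+m)(1/q_i - 1)/(μ-1)`. -/
theorem dual_right_eigenvector
    (H : ℕ → ℕ → ℝ) (g q : ℕ → ℝ) (m ρ μ : ℝ)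
    (hH : ∀ i j, 0 ≤ H i j) (hHsum : ∀ i, Summable (H i)) (hHrow : ∀ i, ∑' j, H i j ≤ 1)
    (hg : ∀ j, 0 ≤ g j) (hgsum : Summable g) (hg1 : ∑' j, g j = 1)
    (hm : 0 < m) (hρ1 : 1 < ρ) (hρm : ρ < 1 + m)
    (hq0 : ∀ i, 0 < q i) (hq1 : ∀ i, q i < 1)
    (hHq : ∀ i, ∑' j, H i j * q j = ρ * ((∑' j, H i j) - 1 + q i))
    (hgq : ∑' j, g j * q j = (1 + m - ρ) / m)
    (hμfin : Summable fun n : ℕ => ∑' j, vecPow g H (n + 1) j)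
    (hμ : μ = m * ∑' n : ℕ, ∑' j, vecPow g H (n + 1) j) (hμ1 : 1 < μ)
    (hfin : ∀ i, Summable fun n : ℕ => matPow H (n + 1) (fun _ => 1) i) :
    ∀ i, (1 + (1 + m - ρ) / ρ) * ((μ - 1) / (ρ - 1))⁻¹
        * ∑' n : ℕ, ρ ^ (n + 1)
            * matPow (fun i' j' => H i' j' * q j' / (q i' * ρ)) (n + 1) (fun _ => 1) i
      = (1 + m) * ((q i)⁻¹ - 1) / (μ - 1) := by
  intro i
  have hρ0 : (0:ℝ) < ρ := lt_trans one_pos hρ1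
  have hq0' : ∀ j, (0:ℝ) ≤ q j := fun j => (hq0 j).le
  have hq1' : ∀ j, q j ≤ 1 := fun j => (hq1 j).le
  have h10 : ∀ j:ℕ, (0:ℝ) ≤ (fun _ : ℕ => (1:ℝ)) j := fun _ => zero_le_one
  have h11 : ∀ j:ℕ, (fun _ : ℕ => (1:ℝ)) j ≤ 1 := fun _ => le_refl 1
  -- recursion: (H^{n+1} q)_i = ρ ((H^{n+1} 1)_i - (H^n 1)_i + (H^n q)_i)
  have hrec : ∀ n i', matPow H (n+1) q i' =
      ρ * (matPow H (n+1) (fun _ => 1) i' - matPow H n (fun _ => 1) i'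
        + matPow H n q i') := by
    intro n
    induction n with
    | zero =>
      intro i'
      have h1 : matPow H 1 (fun _ => 1) i' = ∑' j, H i' j := by
        simp [matPow, matVec]
      have h2 : matPow H 1 q i' = ∑' j, H i' j * q j := rfl
      rw [h2, hHq i', h1]
      simp [matPow]
    | succ k ih =>
      intro i'
      have sA : Summable (fun j => H i' j * matPow H (k+1) (fun _ => 1) j) :=
        matPow_summable H hH hHsum hHrow _ h10 h11 (k+1) i'
      have sB : Summable (fun j => H i' j * matPow H k (fun _ => 1) j) :=
        matPow_summable H hH hHsum hHrow _ h10 h11 k i'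
      have sC : Summable (fun j => H i' j * matPow H k q j) :=
        matPow_summable H hH hHsum hHrow q hq0' hq1' k i'
      have step : matPow H (k+2) q i' = ∑' j, H i' j * matPow H (k+1) q j := rfl
      rw [step]
      have hpt : ∀ j, H i' j * matPow H (k+1) q j =
          ρ * (H i' j * matPow H (k+1) (fun _ => 1) j - H i' j * matPow H k (fun _ => 1) j
            + H i' j * matPow H k q j) := by
        intro j; rw [ih j]; ring
      rw [tsum_congr hpt, tsum_mul_left, Summable.tsum_add (sA.sub sB) sC, Summable.tsum_sub sA sB]
      rfl
  -- the hat matrix identity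
  set Hh : ℕ → ℕ → ℝ := fun i' j' => H i' j' * q j' / (q i' * ρ) with hHh
  have hhat : ∀ n i', matPow Hh n (fun _ => 1) i' = matPow H n q i' / (q i' * ρ ^ n) := by
    intro n
    induction n with
    | zero =>
      intro i'
      simp [matPow, (hq0 i').ne']
    | succ k ih =>
      intro i'
      have hpt : ∀ j, Hh i' j * matPow Hh k (fun _ => 1) j =
          (q i' * ρ ^ (k+1))⁻¹ * (H i' j * matPow H k q j) := by
        intro j
        rw [ih j, hHh]
        have hqj := (hq0 j).ne'
        have hqi := (hq0 i').ne'
        field_simp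
        ring
      calc matPow Hh (k+1) (fun _ => 1) i' = ∑' j, Hh i' j * matPow Hh k (fun _ => 1) j := rfl
        _ = (q i' * ρ ^ (k+1))⁻¹ * ∑' j, H i' j * matPow H k q j := by
            rw [tsum_congr hpt, tsum_mul_left]
        _ = matPow H (k+1) q i' / (q i' * ρ ^ (k+1)) := by
            rw [div_eq_inv_mul]; rfl
  -- abbreviations
  set a : ℕ → ℝ := fun n => matPow H n (fun _ => 1) i with ha
  set b : ℕ → ℝ := fun n => matPow H n q i with hb
  have hbz : b 0 = q i := rfl
  have haz : a 0 = 1 := rfl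
  have hsa1 : Summable (fun n => a (n+1)) := hfin i
  have hsa : Summable a := (summable_nat_add_iff 1).mp hsa1
  have hsb1 : Summable (fun n => b (n+1)) :=
    Summable.of_nonneg_of_le
      (fun n => (matPow_bounds H hH hHsum hHrow q hq0' hq1' (n+1) i).1)
      (fun n => matPow_mono H hH hHsum hHrow q (fun _ => 1) hq0' hq1' h10 h11 hq1' (n+1) i)
      hsa1
  have hsb : Summable b := (summable_nat_add_iff 1).mp hsb1
  -- telescoping and sum of recursion
  have hta : ∑' n, a n = 1 + ∑' n, a (n+1) := by
    rw [Summable.tsum_eq_zero_add hsa, haz]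
  have htb : ∑' n, b n = q i + ∑' n, b (n+1) := by
    rw [Summable.tsum_eq_zero_add hsb, hbz]
  set Sb : ℝ := ∑' n, b (n+1) with hSb
  have hSbval : Sb = ρ * (1 - q i) / (ρ - 1) := by
    have hsum : Sb = ρ * ((∑' n, a (n+1)) - (∑' n, a n) + ∑' n, b n) := by
      rw [hSb]
      have : ∀ n, b (n+1) = ρ * (a (n+1) - a n + b n) := fun n => hrec n i
      rw [tsum_congr this, tsum_mul_left, Summable.tsum_add (hsa1.sub hsa) hsb, Summable.tsum_sub hsa1 hsa]
    rw [hta, htb] at hsum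
    have hρ1' : ρ - 1 ≠ 0 := by linarith
    field_simp
    linarith [hsum]
  -- compute the tsum in the goal
  have hqi : q i ≠ 0 := (hq0 i).ne'
  have hgoal_sum : (∑' n : ℕ, ρ ^ (n + 1) * matPow Hh (n + 1) (fun _ => 1) i)
      = Sb / q i := by
    have hpt : ∀ n : ℕ, ρ ^ (n + 1) * matPow Hh (n + 1) (fun _ => 1) i
        = b (n+1) * (q i)⁻¹ := by
      intro n
      rw [hhat (n+1) i]
      have hρn : ρ ^ (n+1) ≠ 0 := pow_ne_zero _ hρ0.ne'
      field_simp
      ring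
    rw [tsum_congr hpt, tsum_mul_right, hSb, div_eq_mul_inv]
  rw [hgoal_sum, hSbval]
  have hμ1' : μ - 1 ≠ 0 := by linarith
  have hρ1' : ρ - 1 ≠ 0 := by linarith
  field_simp
  ring
end

section
/- For every index i and every sequence s = (s_j) with 0 ≤ s_j ≤ 1, the Harris–Sevastyanov transform satisfies (f_i(s(1−q)+q) − q_i)/(1−q_i) = (∑_j h̃_{ij} s_j)/(1+m̃ − m̃ ∑_j g̃_j s_j), where s(1−q)+q denotes the sequence with entries s_j(1−q_j)+q_j; moreover ∑_j g̃_j = 1 and ∑_j h̃_{ij} = 1 for every i, so the transformed reproduction laws are multivariate shifted geometric distributions. -/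
/-!
Write `c_i := q_i - h_{i0}`. At the fixed point `q` the denominator of `f` equals `ρ`, and the fixed-point
equation becomes `∑_j h_{ij} q_j = ρ c_i`. Substituting `s(1-q) + q` and putting
`X := ∑_j h_{ij} s_j (1-q_j)`, `Y := ∑_j g_j s_j (1-q_j)`, everything is linear in `X` and `Y`:
`f_i(s(1-q)+q) - q_i = (X + ρ c_i)/(ρ - m Y) - c_i = (X + m c_i Y)/(ρ - m Y)`, which is the
linear-fractional form with parameters `h̃`, `g̃`, `m̃ = ρ - 1`. The normalisations are the case `s = 1`,
using `m ∑_j g_j (1-q_j) = ρ - 1`.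
-/

/-- The linear-fractional generating function
`f_i(s) = h_{i0} + (∑_j h_{ij} s_j) / (1 + m - m ∑_j g_j s_j)` with `h_{i0} = 1 - ∑_j h_{ij}`. -/
noncomputable def lfGen (H : ℕ → ℕ → ℝ) (g : ℕ → ℝ) (m : ℝ) (i : ℕ) (s : ℕ → ℝ) : ℝ :=
  (1 - ∑' j, H i j) + (∑' j, H i j * s j) / (1 + m - m * ∑' j, g j * s j)

open Set

lemma summable_mul_of_mem_Icc {w x : ℕ → ℝ} (hw : Summable w) (hw0 : ∀ j, 0 ≤ w j)
    (hx : ∀ j, x j ∈ Icc (0 : ℝ) 1) : Summable fun j => w j * x j :=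
  Summable.of_nonneg_of_le (fun j => mul_nonneg (hw0 j) (hx j).1)
    (fun j => mul_le_of_le_one_right (hw0 j) (hx j).2) hw

lemma tsum_mul_one_sub {w x : ℕ → ℝ} (hw : Summable w) (hwx : Summable fun j => w j * x j) :
    ∑' j, w j * (1 - x j) = ∑' j, w j - ∑' j, w j * x j := by
  simp_rw [mul_one_sub]
  exact hw.tsum_sub hwx

/-- The offspring weights `h̃_{ij}` of the Harris–Sevastyanov transform. -/
noncomputable def tildeH (H : ℕ → ℕ → ℝ) (g q : ℕ → ℝ) (m : ℝ) (i j : ℕ) : ℝ :=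
  (1 - q j) * (H i j + m * g j * (q i - (1 - ∑' l, H i l))) / (1 - q i)

/-- The weights `g̃_j` of the Harris–Sevastyanov transform, whose mean parameter is `m̃ = ρ - 1`. -/
noncomputable def tildeG (g q : ℕ → ℝ) (m ρ : ℝ) (j : ℕ) : ℝ :=
  m * g j * (1 - q j) / (ρ - 1)

section HarrisSevastyanov

variable {H : ℕ → ℕ → ℝ} {g q s : ℕ → ℝ} {m ρ : ℝ} {i : ℕ}

lemma tsum_mul_eq_of_lfGen_eq (hρ : ρ ≠ 0) (hD : 1 + m - m * ∑' j, g j * q j = ρ)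
    (hfix : lfGen H g m i q = q i) :
    ∑' j, H i j * q j = ρ * (q i - (1 - ∑' j, H i j)) := by
  rw [lfGen, hD] at hfix
  field_simp at hfix
  linarith

lemma lfGen_add_eq (hH : ∀ j, 0 ≤ H i j) (hHsum : Summable (H i)) (hg : ∀ j, 0 ≤ g j)
    (hgsum : Summable g) (hq : ∀ j, q j ∈ Icc (0 : ℝ) 1) {u : ℕ → ℝ}
    (hu : ∀ j, u j ∈ Icc (0 : ℝ) 1) (hD : 1 + m - m * ∑' j, g j * q j = ρ)
    (hHq : ∑' j, H i j * q j = ρ * (q i - (1 - ∑' j, H i j))) :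
    lfGen H g m i (fun j => u j + q j)
      = (1 - ∑' j, H i j) + (∑' j, H i j * u j + ρ * (q i - (1 - ∑' j, H i j)))
          / (ρ - m * ∑' j, g j * u j) := by
  have hHuq : ∑' j, H i j * (u j + q j) = ∑' j, H i j * u j + ∑' j, H i j * q j := by
    simp_rw [mul_add]
    exact (summable_mul_of_mem_Icc hHsum hH hu).tsum_add (summable_mul_of_mem_Icc hHsum hH hq)
  have hguq : ∑' j, g j * (u j + q j) = ∑' j, g j * u j + ∑' j, g j * q j := by
    simp_rw [mul_add]
    exact (summable_mul_of_mem_Icc hgsum hg hu).tsum_add (summable_mul_of_mem_Icc hgsum hg hq)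
  rw [lfGen, hHuq, hguq, hHq, ← hD]
  ring_nf

lemma tsum_tildeG_mul (s : ℕ → ℝ) :
    ∑' j, tildeG g q m ρ j * s j = m / (ρ - 1) * ∑' j, g j * (s j * (1 - q j)) := by
  rw [← tsum_mul_left]
  congr 1 with j
  rw [tildeG]
  ring

lemma tsum_tildeH_mul (hHu : Summable fun j => H i j * (s j * (1 - q j)))
    (hgu : Summable fun j => g j * (s j * (1 - q j))) :
    ∑' j, tildeH H g q m i j * s j
      = (∑' j, H i j * (s j * (1 - q j))
          + m * (q i - (1 - ∑' l, H i l)) * ∑' j, g j * (s j * (1 - q j))) / (1 - q i) := by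
  rw [← tsum_mul_left, ← hHu.tsum_add (hgu.mul_left _), ← tsum_div_const]
  congr 1 with j
  rw [tildeH]
  ring

lemma tsum_tildeG (hρ : ρ - 1 ≠ 0) (hg1q : m * ∑' j, g j * (1 - q j) = ρ - 1) :
    ∑' j, tildeG g q m ρ j = 1 := by
  have h := tsum_tildeG_mul (g := g) (q := q) (m := m) (ρ := ρ) 1
  simp only [Pi.one_apply, mul_one, one_mul] at h
  rw [h, div_mul_eq_mul_div, hg1q, div_self hρ]

lemma tsum_tildeH (hqi : q i ≠ 1) (hHsum : Summable (H i))
    (hHq_sum : Summable fun j => H i j * q j) (hg1q_sum : Summable fun j => g j * (1 - q j))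
    (hHq : ∑' j, H i j * q j = ρ * (q i - (1 - ∑' j, H i j)))
    (hg1q : m * ∑' j, g j * (1 - q j) = ρ - 1) :
    ∑' j, tildeH H g q m i j = 1 := by
  have hH1q_sum : Summable fun j => H i j * (1 - q j) := by
    simpa only [mul_one_sub] using hHsum.sub hHq_sum
  have h := tsum_tildeH_mul (s := 1) (m := m) (i := i)
    (by simpa only [Pi.one_apply, one_mul] using hH1q_sum)
    (by simpa only [Pi.one_apply, one_mul] using hg1q_sum)
  simp only [Pi.one_apply, mul_one, one_mul] at h
  have hqi' : 1 - q i ≠ 0 := sub_ne_zero.mpr (Ne.symm hqi)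
  rw [h, tsum_mul_one_sub hHsum hHq_sum, hHq, mul_right_comm, hg1q, div_eq_one_iff_eq hqi']
  ring

lemma lfGen_shift_sub_div_eq (hH : ∀ j, 0 ≤ H i j) (hHsum : Summable (H i))
    (hg : ∀ j, 0 ≤ g j) (hgsum : Summable g) (hm : 0 ≤ m) (hρ : ρ - 1 ≠ 0) (hqi : q i ≠ 1)
    (hq : ∀ j, q j ∈ Icc (0 : ℝ) 1) (hs : ∀ j, s j ∈ Icc (0 : ℝ) 1)
    (hD : 1 + m - m * ∑' j, g j * q j = ρ)
    (hHq : ∑' j, H i j * q j = ρ * (q i - (1 - ∑' j, H i j)))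
    (hg1q : m * ∑' j, g j * (1 - q j) = ρ - 1) :
    (lfGen H g m i (fun j => s j * (1 - q j) + q j) - q i) / (1 - q i)
      = (∑' j, tildeH H g q m i j * s j)
          / (1 + (ρ - 1) - (ρ - 1) * ∑' j, tildeG g q m ρ j * s j) := by
  have hu : ∀ j, s j * (1 - q j) ∈ Icc (0 : ℝ) 1 :=
    fun j => unitInterval.mul_mem (hs j) (Icc.mem_iff_one_sub_mem.mp (hq j))
  have hgu_sum := summable_mul_of_mem_Icc hgsum hg hu
  have hg1q_sum := summable_mul_of_mem_Icc hgsum hg fun j => Icc.mem_iff_one_sub_mem.mp (hq j)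
  -- `m Y ≤ m ∑ g (1 - q) = ρ - 1`, so the common denominator `ρ - m Y` is at least `1`.
  have hY : m * ∑' j, g j * (s j * (1 - q j)) ≤ ρ - 1 := by
    rw [← hg1q]
    refine mul_le_mul_of_nonneg_left (hgu_sum.tsum_le_tsum (fun j => ?_) hg1q_sum) hm
    exact mul_le_mul_of_nonneg_left
      (mul_le_of_le_one_left (Icc.mem_iff_one_sub_mem.mp (hq j)).1 (hs j).2) (hg j)
  have hqi' : 1 - q i ≠ 0 := sub_ne_zero.mpr (Ne.symm hqi)
  rw [lfGen_add_eq hH hHsum hg hgsum hq hu hD hHq,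
    tsum_tildeH_mul (summable_mul_of_mem_Icc hHsum hH hu) hgu_sum, tsum_tildeG_mul]
  set Y := ∑' j, g j * (s j * (1 - q j))
  set X := ∑' j, H i j * (s j * (1 - q j))
  have hden : ρ - m * Y ≠ 0 := by linarith
  have hden' : 1 + (ρ - 1) - (ρ - 1) * (m / (ρ - 1) * Y) = ρ - m * Y := by
    field_simp
    ring
  rw [hden']
  field_simp
  ring

end HarrisSevastyanov

theorem harris_sevastyanov_is_shifted_geometric_general
    (H : ℕ → ℕ → ℝ) (g q : ℕ → ℝ) (m ρ : ℝ)
    (hH : ∀ i j, 0 ≤ H i j) (hHsum : ∀ i, Summable (H i))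
    (hg : ∀ j, 0 ≤ g j) (hgsum : Summable g) (hg1 : ∑' j, g j = 1)
    (hm : 0 < m) (hρ1 : 1 < ρ)
    (hq0 : ∀ i, 0 < q i) (hq1 : ∀ i, q i < 1)
    (hfix : ∀ i, lfGen H g m i q = q i)
    (hgq : ∑' j, g j * q j = (1 + m - ρ) / m) :
    (∀ i, ∀ s : ℕ → ℝ, (∀ j, s j ∈ Set.Icc (0:ℝ) 1) →
        (lfGen H g m i (fun j => s j * (1 - q j) + q j) - q i) / (1 - q i)
          = (∑' j, ((1 - q j) * (H i j + m * g j * (q i - (1 - ∑' l, H i l))) / (1 - q i)) * s j)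
            / (1 + (ρ - 1) - (ρ - 1) * ∑' j, (m * g j * (1 - q j) / (ρ - 1)) * s j))
    ∧ (∑' j, m * g j * (1 - q j) / (ρ - 1)) = 1
    ∧ ∀ i, (∑' j, (1 - q j) * (H i j + m * g j * (q i - (1 - ∑' l, H i l))) / (1 - q i)) = 1 := by
  have hq : ∀ j, q j ∈ Icc (0 : ℝ) 1 := fun j => ⟨(hq0 j).le, (hq1 j).le⟩
  have hqi : ∀ i, q i ≠ 1 := fun i => (hq1 i).ne
  have hρ : ρ - 1 ≠ 0 := sub_ne_zero.mpr hρ1.ne'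
  have hgq_sum := summable_mul_of_mem_Icc hgsum hg hq
  have hg1q_sum := summable_mul_of_mem_Icc hgsum hg fun j => Icc.mem_iff_one_sub_mem.mp (hq j)
  have hD : 1 + m - m * ∑' j, g j * q j = ρ := by
    rw [hgq]
    field_simp
    ring
  have hg1q : m * ∑' j, g j * (1 - q j) = ρ - 1 := by
    rw [tsum_mul_one_sub hgsum hgq_sum, hg1]
    linarith
  have hHq (i : ℕ) : ∑' j, H i j * q j = ρ * (q i - (1 - ∑' j, H i j)) :=
    tsum_mul_eq_of_lfGen_eq (zero_lt_one.trans hρ1).ne' hD (hfix i)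
  refine ⟨fun i s hs => ?_, tsum_tildeG hρ hg1q, fun i => ?_⟩
  · exact lfGen_shift_sub_div_eq (hH i) (hHsum i) hg hgsum hm.le hρ (hqi i) hq hs hD (hHq i) hg1q
  · exact tsum_tildeH (hqi i) (hHsum i) (summable_mul_of_mem_Icc (hHsum i) (hH i) hq) hg1q_sum
      (hHq i) hg1q

/-- the Harris–Sevastyanov transform
`(f_i(s(1-q)+q) - q_i)/(1-q_i)` equals `(∑_j h̃_{ij} s_j)/(1 + m̃ - m̃ ∑_j g̃_j s_j)` with
`m̃ = ρ-1`, `g̃_j = m g_j (1-q_j)/(ρ-1)`, `h̃_{ij} = (1-q_j)(h_{ij} + m g_j (q_i - h_{i0}))/(1-q_i)`;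
moreover `∑_j g̃_j = 1` and `∑_j h̃_{ij} = 1` for every `i`. -/
theorem harris_sevastyanov_is_shifted_geometric
    (H : ℕ → ℕ → ℝ) (g q : ℕ → ℝ) (m ρ : ℝ)
    (hH : ∀ i j, 0 ≤ H i j) (hHsum : ∀ i, Summable (H i)) (hHrow : ∀ i, ∑' j, H i j ≤ 1)
    (hg : ∀ j, 0 ≤ g j) (hgsum : Summable g) (hg1 : ∑' j, g j = 1)
    (hm : 0 < m) (hρ1 : 1 < ρ) (hρm : ρ < 1 + m)
    (hq0 : ∀ i, 0 < q i) (hq1 : ∀ i, q i < 1)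
    (hfix : ∀ i, lfGen H g m i q = q i)
    (hgq : ∑' j, g j * q j = (1 + m - ρ) / m) :
    (∀ i, ∀ s : ℕ → ℝ, (∀ j, s j ∈ Set.Icc (0:ℝ) 1) →
        (lfGen H g m i (fun j => s j * (1 - q j) + q j) - q i) / (1 - q i)
          = (∑' j, ((1 - q j) * (H i j + m * g j * (q i - (1 - ∑' l, H i l))) / (1 - q i)) * s j)
            / (1 + (ρ - 1) - (ρ - 1) * ∑' j, (m * g j * (1 - q j) / (ρ - 1)) * s j))
    ∧ (∑' j, m * g j * (1 - q j) / (ρ - 1)) = 1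
    ∧ ∀ i, (∑' j, (1 - q j) * (H i j + m * g j * (q i - (1 - ∑' l, H i l))) / (1 - q i)) = 1 :=
  harris_sevastyanov_is_shifted_geometric_general H g q m ρ hH hHsum hg hgsum hg1 hm hρ1 hq0 hq1
    hfix hgq
end
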